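/- arXiv:2311.00857 — 3 statements merged into one kernel-verified Lean document; each statement's English description precedes it below -/
import Mathlib

section
/- Let k ≥ 2 be an integer and let K, G, H be graphs such that for every partition of the vertex set of G into k parts, some part induces a subgraph of G containing a copy of H. Let Γ be a k-partite graph on a vertex set V, let R be a graph on V, and suppose the edges of R are colored red and blue so that there is no red copy of K and no blue copy of H in R. Then the red/blue coloring of the union graph Γ ∪ R, in which every edge of Γ is colored blue and every edge of R not belonging to Γ keeps its original color, contains no red copy of K and no blue copy of G. -/
/-! Pull the `k`-partition of `Γ` back along a blue copy of `G` in `Γ ∪ R`: some part of the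
resulting partition of `V(G)` induces a copy of `H`, and since `Γ` has no edges inside a part,
that copy of `H` uses only blue edges of `R`. Red copies of `K` in `Γ ∪ R` are red in `R`. -/

open SimpleGraph Filter

/-- The number of edges `e(G)` of a graph. -/
noncomputable def numEdges {V : Type*} (G : SimpleGraph V) : ℕ := Nat.card G.edgeSet

/-- `d₂` evaluated on a (vertex count, edge count) pair : `0` if there are no edges,
`1/2` for a single edge (`v = 2`), and `(e-1)/(v-2)` otherwise. -/
noncomputable def dens2 (v e : ℕ) : ℝ :=
  if e = 0 then 0 else if v = 2 then 1 / 2 else ((e : ℝ) - 1) / ((v : ℝ) - 2)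

/-- The 2-density `m₂(G) = max_{G' ⊆ G} d₂(G')`. -/
noncomputable def m2 {V : Type*} (G : SimpleGraph V) : ℝ :=
  sSup {x | ∃ G' : G.Subgraph, x = dens2 (Nat.card G'.verts) (Nat.card G'.edgeSet)}

/-- The asymmetric density
`m₂(H₁,H₂) = max { e(H₁') / (v(H₁') - 2 + 1/m₂(H₂)) : H₁' ⊆ H₁, e(H₁') ≥ 1 }`. -/
noncomputable def m2Asym {V₁ V₂ : Type*} (H₁ : SimpleGraph V₁) (H₂ : SimpleGraph V₂) : ℝ :=
  sSup {x | ∃ H' : H₁.Subgraph, 1 ≤ Nat.card H'.edgeSet ∧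
    x = (Nat.card H'.edgeSet : ℝ) / ((Nat.card H'.verts : ℝ) - 2 + 1 / m2 H₂)}

/-- `H₁` is strictly balanced with respect to `m₂(·,H₂)`: no proper subgraph with at
least one edge attains the maximum in the definition of `m₂(H₁,H₂)`. -/
def StrictlyBalancedWrt {V₁ V₂ : Type*} (H₁ : SimpleGraph V₁) (H₂ : SimpleGraph V₂) : Prop :=
  ∀ H' : H₁.Subgraph, H' ≠ ⊤ → 1 ≤ Nat.card H'.edgeSet →
    (Nat.card H'.edgeSet : ℝ) / ((Nat.card H'.verts : ℝ) - 2 + 1 / m2 H₂) < m2Asym H₁ H₂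

/-- `m(G) = max { e(F)/v(F) : F ⊆ G }`. -/
noncomputable def mDensity {V : Type*} (G : SimpleGraph V) : ℝ :=
  sSup {x | ∃ G' : G.Subgraph, x = (Nat.card G'.edgeSet : ℝ) / (Nat.card G'.verts : ℝ)}

/-- `d(G) = e(G)/v(G)`. -/
noncomputable def edgeVertexRatio {V : Type*} (G : SimpleGraph V) : ℝ :=
  (numEdges G : ℝ) / (Nat.card V : ℝ)

/-- `G` contains a copy of `H` as a subgraph. -/
def ContainsCopy {W V : Type*} (H : SimpleGraph W) (G : SimpleGraph V) : Prop :=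
  ∃ f : W ↪ V, ∀ a b, H.Adj a b → G.Adj (f a) (f b)

/-- `F` is `(H₁,H₂)`-Ramsey: every red/blue coloring of the edges of `F` (given by the
subgraph `R ≤ F` of red edges) yields a red copy of `H₁` or a blue copy of `H₂`. -/
def IsRamseyFor {W₁ W₂ V : Type*} (H₁ : SimpleGraph W₁) (H₂ : SimpleGraph W₂)
    (F : SimpleGraph V) : Prop :=
  ∀ R : SimpleGraph V, R ≤ F → ContainsCopy H₁ R ∨ ContainsCopy H₂ (F \ R)

/-- The probability that the Erdős–Rényi random graph `G(n,p)` lies in the event `A`. -/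
noncomputable def erProb (n : ℕ) (p : ℝ) (A : Set (SimpleGraph (Fin n))) : ℝ :=
  ∑ G : SimpleGraph (Fin n),
    Set.indicator A (fun G => p ^ numEdges G * (1 - p) ^ (n.choose 2 - numEdges G)) G

/-- The density of an `n`-vertex graph: its number of edges divided by `C(n,2)`. -/
noncomputable def graphDensity (n : ℕ) (G : SimpleGraph (Fin n)) : ℝ :=
  (numEdges G : ℝ) / (n.choose 2 : ℝ)

/-- `phat` is the perturbed Ramsey threshold `p(n;H₁,H₂,d)`:
(i) if `p = ω(phat)` then for every sequence of `n`-vertex graphs of density at least `d`,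
`Gₙ ∪ G(n,p)` is `(H₁,H₂)`-Ramsey whp; (ii) if `p = o(phat)` then for some such sequence,
`Gₙ ∪ G(n,p)` is whp not `(H₁,H₂)`-Ramsey. -/
def IsPerturbedRamseyThreshold {W₁ W₂ : Type*} (H₁ : SimpleGraph W₁) (H₂ : SimpleGraph W₂)
    (d : ℝ) (phat : ℕ → ℝ) : Prop :=
  (∀ p : ℕ → ℝ, (∀ n, 0 ≤ p n ∧ p n ≤ 1) →
      Tendsto (fun n => p n / phat n) atTop atTop →
      ∀ Gseq : (n : ℕ) → SimpleGraph (Fin n),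
        (∀ᶠ n in atTop, d ≤ graphDensity n (Gseq n)) →
        Tendsto (fun n => erProb n (p n) {R | IsRamseyFor H₁ H₂ (Gseq n ⊔ R)})
          atTop (nhds 1)) ∧
  (∀ p : ℕ → ℝ, (∀ n, 0 ≤ p n ∧ p n ≤ 1) →
      Tendsto (fun n => p n / phat n) atTop (nhds 0) →
      ∃ Gseq : (n : ℕ) → SimpleGraph (Fin n),
        (∀ᶠ n in atTop, d ≤ graphDensity n (Gseq n)) ∧
        Tendsto (fun n => erProb n (p n) {R | ¬ IsRamseyFor H₁ H₂ (Gseq n ⊔ R)})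
          atTop (nhds 1))

/-- `K_m'`: the complete graph on `Fin m` minus the maximum matching
`{0,1}, {2,3}, …`. -/
def cliqueMinusMatching (m : ℕ) : SimpleGraph (Fin m) :=
  SimpleGraph.fromRel (fun x y => x.val / 2 ≠ y.val / 2)

/-- The graph obtained from `T` by adding a new (apex) vertex `none` joined to the
vertices of `S`. -/
def apexGraph {VT : Type*} (T : SimpleGraph VT) (S : Set VT) : SimpleGraph (Option VT) :=
  SimpleGraph.fromRel (fun x y =>
    (∃ a b, x = some a ∧ y = some b ∧ T.Adj a b) ∨ (x = none ∧ ∃ a ∈ S, y = some a))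

/-- The star on `t` vertices (center `0`, leaves `1,…,t-1`) together with a new vertex `t`
adjacent to every vertex of the star. -/
def starPlusApex (t : ℕ) : SimpleGraph (Fin (t + 1)) :=
  SimpleGraph.fromRel (fun x y =>
    (x.val = 0 ∧ 1 ≤ y.val ∧ y.val < t) ∨ (x.val = t ∧ y.val < t))

open scoped Classical in
/-- The edge density `d(A,B) = e(A,B)/(|A|·|B|)` between two finite vertex sets. -/
noncomputable def pairDensity {V : Type*} (G : SimpleGraph V) (A B : Finset V) : ℝ :=
  (((A ×ˢ B).filter (fun p => G.Adj p.1 p.2)).card : ℝ) / ((A.card : ℝ) * (B.card : ℝ))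

/-- `(A,B)` is an `ε`-regular pair: for all `X ⊆ A`, `Y ⊆ B` with `|X| > ε|A|` and
`|Y| > ε|B|`, one has `|d(X,Y) - d(A,B)| < ε`. -/
def EpsRegularPair {V : Type*} (G : SimpleGraph V) (ε : ℝ) (A B : Finset V) : Prop :=
  ∀ X ⊆ A, ∀ Y ⊆ B, ε * (A.card : ℝ) < (X.card : ℝ) → ε * (B.card : ℝ) < (Y.card : ℝ) →
    |pairDensity G X Y - pairDensity G A B| < ε


theorem ContainsCopy.mono {W V : Type*} {H : SimpleGraph W} {G₁ G₂ : SimpleGraph V}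
    (h : ContainsCopy H G₁) (hle : G₁ ≤ G₂) : ContainsCopy H G₂ :=
  let ⟨f, hf⟩ := h
  ⟨f, fun a b hab => hle (hf a b hab)⟩

theorem ContainsCopy.trans {U W V : Type*} {H : SimpleGraph U} {G : SimpleGraph W}
    {F : SimpleGraph V} (hHG : ContainsCopy H G) (hGF : ContainsCopy G F) : ContainsCopy H F :=
  let ⟨f, hf⟩ := hHG
  let ⟨g, hg⟩ := hGF
  ⟨f.trans g, fun a b hab => hg _ _ (hf a b hab)⟩

theorem containsCopy_induce_colorClass {W V ι : Type*} {G : SimpleGraph W}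
    {Γ B : SimpleGraph V} {P : V → ι} (hP : ∀ x y, Γ.Adj x y → P x ≠ P y) {f : W ↪ V}
    (hf : ∀ a b, G.Adj a b → (Γ ⊔ B).Adj (f a) (f b)) (i : ι) :
    ContainsCopy (G.induce {v | P (f v) = i}) B := by
  refine ⟨(Function.Embedding.subtype _).trans f, fun a b hab => ?_⟩
  have hsame : P (f a) = P (f b) := a.2.trans b.2.symm
  exact (hf a b hab).resolve_left fun hΓ => hP _ _ hΓ hsame

theorem stmt6_general {VK VG VH V : Type*} (k : ℕ)
    (K : SimpleGraph VK) (G : SimpleGraph VG) (H : SimpleGraph VH)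
    -- every partition of `V(G)` into `k` parts has a part inducing a copy of `H`
    (hpart : ∀ P : VG → Fin k, ∃ i : Fin k, ContainsCopy H (G.induce {v | P v = i}))
    -- `Γ` is `k`-partite
    (Γ : SimpleGraph V) (hΓ : ∃ P : V → Fin k, ∀ x y, Γ.Adj x y → P x ≠ P y)
    -- a red/blue coloring of `R` (red subgraph `Rred`) with no red `K` and no blue `H`
    (R Rred : SimpleGraph V)
    (hK : ¬ ContainsCopy K Rred) (hH : ¬ ContainsCopy H (R \ Rred)) :
    -- coloring of `Γ ⊔ R`: edges of `Γ` blue, edges of `R` outside `Γ` keep their color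
    ¬ ContainsCopy K (Rred \ Γ) ∧ ¬ ContainsCopy G (Γ ⊔ (R \ Rred)) := by
  obtain ⟨P, hP⟩ := hΓ
  refine ⟨fun hred => hK (hred.mono sdiff_le), ?_⟩
  rintro ⟨f, hf⟩
  obtain ⟨i, hi⟩ := hpart (P ∘ f)
  exact hH (hi.trans (containsCopy_induce_colorClass hP hf i))

theorem stmt6 {VK VG VH V : Type*} (k : ℕ) (hk : 2 ≤ k)
    (K : SimpleGraph VK) (G : SimpleGraph VG) (H : SimpleGraph VH)
    -- every partition of `V(G)` into `k` parts has a part inducing a copy of `H`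
    (hpart : ∀ P : VG → Fin k, ∃ i : Fin k, ContainsCopy H (G.induce {v | P v = i}))
    -- `Γ` is `k`-partite
    (Γ : SimpleGraph V) (hΓ : ∃ P : V → Fin k, ∀ x y, Γ.Adj x y → P x ≠ P y)
    -- a red/blue coloring of `R` (red subgraph `Rred`) with no red `K` and no blue `H`
    (R Rred : SimpleGraph V) (hle : Rred ≤ R)
    (hK : ¬ ContainsCopy K Rred) (hH : ¬ ContainsCopy H (R \ Rred)) :
    -- coloring of `Γ ⊔ R`: edges of `Γ` blue, edges of `R` outside `Γ` keep their color
    ¬ ContainsCopy K (Rred \ Γ) ∧ ¬ ContainsCopy G (Γ ⊔ (R \ Rred)) :=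
  stmt6_general k K G H hpart Γ hΓ R Rred hK hH
end

section
/- Let s, k be integers with 2 ≤ k < s/3. The graph obtained by taking k pairwise disjoint copies of K_{⌈s/k⌉}' and adding all edges between vertices of distinct copies contains K_s' as a subgraph. -/
open SimpleGraph Filter

/-!
Cut `0, 1, …, s - 1` into `k` consecutive blocks of `m = ⌈s/k⌉` vertices and send the `q`-th
block into the `q`-th copy of `K_m'`. Non-edges of `K_s'` joining two blocks are harmless, since
distinct copies are completely joined. Inside a block starting at an even position the matching
of `K_s'` is that of `K_m'`; a block can start at an odd position `q * m` only when `m` is odd,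
and then rotating it back by one slot matches the two matchings up.
-/

def copiesJoin {α : Type*} (H : SimpleGraph α) (β : Type*) : SimpleGraph (α × β) :=
  fromRel fun x y => x.2 ≠ y.2 ∨ (x.2 = y.2 ∧ H.Adj x.1 y.1)

lemma copiesJoin_adj {α β : Type*} {H : SimpleGraph α} {x y : α × β} :
    (copiesJoin H β).Adj x y ↔ x.2 ≠ y.2 ∨ H.Adj x.1 y.1 := by
  rw [copiesJoin, fromRel_adj, Ne, Prod.ext_iff]
  grind [H.adj_symm, H.ne_of_adj]

lemma cliqueMinusMatching_adj {m : ℕ} {x y : Fin m} :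
    (cliqueMinusMatching m).Adj x y ↔ x.val / 2 ≠ y.val / 2 := by
  rw [cliqueMinusMatching, fromRel_adj]
  grind

/-- The slot in `K_m'` of the vertex `T + r` of `K_s'`, in the block of `m` consecutive
vertices starting at `T`. A block starting at an odd `T` is rotated back by one, so that its
internal matching edges `{T + 2i + 1, T + 2i + 2}` land on `{2i, 2i + 1}`; its first vertex,
matched into the previous block, goes to slot `m - 1`, which is unmatched because `m` is odd. -/
def blockSlot (m T r : ℕ) : ℕ :=
  if T % 2 = 1 then (if r = 0 then m - 1 else r - 1) else r

lemma blockSlot_lt {m T r : ℕ} (hr : r < m) : blockSlot m T r < m := by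
  unfold blockSlot; split_ifs <;> omega

lemma blockSlot_inj {m T ra rb : ℕ} (hra : ra < m) (hrb : rb < m) :
    blockSlot m T ra = blockSlot m T rb ↔ ra = rb := by
  unfold blockSlot; split_ifs <;> omega

lemma blockSlot_div_two_ne {m T ra rb : ℕ} (hm : T % 2 = 1 → m % 2 = 1)
    (hra : ra < m) (hrb : rb < m) (h : (T + ra) / 2 ≠ (T + rb) / 2) :
    blockSlot m T ra / 2 ≠ blockSlot m T rb / 2 := by
  unfold blockSlot; split_ifs at hm ⊢ <;> omega

theorem containsCopy_cliqueMinusMatching_copiesJoin {s m k : ℕ} (h : s ≤ k * m) :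
    ContainsCopy (cliqueMinusMatching s) (copiesJoin (cliqueMinusMatching m) (Fin k)) := by
  have hmod (i : Fin s) : i.val % m < m :=
    Nat.mod_lt _ (Nat.pos_of_ne_zero (by rintro rfl; have := i.isLt; omega))
  have hdiv (i : Fin s) : i.val / m < k :=
    Nat.div_lt_of_lt_mul (i.isLt.trans_le (h.trans_eq (mul_comm k m)))
  let f (i : Fin s) : Fin m × Fin k :=
    (⟨blockSlot m (i / m * m) (i % m), blockSlot_lt (hmod i)⟩, ⟨i / m, hdiv i⟩)
  refine ⟨⟨f, fun a b hab => ?_⟩, fun a b hab => ?_⟩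
  · simp only [f, Prod.mk.injEq, Fin.mk.injEq] at hab
    obtain ⟨hslot, hblock⟩ := hab
    rw [hblock, blockSlot_inj (hmod a) (hmod b)] at hslot
    exact Fin.ext (Nat.ext_div_modEq hblock hslot)
  · rw [cliqueMinusMatching_adj] at hab
    rw [copiesJoin_adj, cliqueMinusMatching_adj]
    by_cases hblock : a.val / m = b.val / m
    · right
      change blockSlot m (a / m * m) (a % m) / 2 ≠ blockSlot m (b / m * m) (b % m) / 2
      rw [← hblock]
      have hodd : a / m * m % 2 = 1 → m % 2 = 1 := fun h =>
        Nat.odd_iff.mp (Nat.odd_mul.mp (Nat.odd_iff.mpr h)).2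
      refine blockSlot_div_two_ne hodd (hmod a) (hmod b) ?_
      rwa [Nat.div_add_mod', hblock, Nat.div_add_mod']
    · exact Or.inl fun h => hblock (Fin.mk.inj_iff.mp h)

theorem stmt12_general (s k : ℕ) (hk : 2 ≤ k) :
    ContainsCopy (cliqueMinusMatching s)
      (SimpleGraph.fromRel (fun x y : Fin ((s + k - 1) / k) × Fin k =>
        x.2 ≠ y.2 ∨ (x.2 = y.2 ∧ (cliqueMinusMatching ((s + k - 1) / k)).Adj x.1 y.1))) := by
  refine containsCopy_cliqueMinusMatching_copiesJoin ?_
  have hceil := Nat.lt_mul_div_succ (s + k - 1) (show 0 < k by omega)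
  rw [Nat.mul_add] at hceil
  omega

theorem stmt12 (s k : ℕ) (hk : 2 ≤ k) (hks : 3 * k < s) :
    ContainsCopy (cliqueMinusMatching s)
      (SimpleGraph.fromRel (fun x y : Fin ((s + k - 1) / k) × Fin k =>
        x.2 ≠ y.2 ∨ (x.2 = y.2 ∧ (cliqueMinusMatching ((s + k - 1) / k)).Adj x.1 y.1))) :=
  stmt12_general s k hk
end

section
/- Let G be as in the context (a tree T with at least 4 vertices plus an apex-type vertex v satisfying conditions (a) and (b)). Then G has chromatic number exactly 3. -/
open SimpleGraph Filter

namespace apexGraph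

variable {V : Type*} {T : SimpleGraph V} {S : Set V}

@[simp]
lemma adj_some_some {a b : V} : (apexGraph T S).Adj (some a) (some b) ↔ T.Adj a b := by
  simp only [apexGraph, fromRel_adj, ne_eq, Option.some.injEq, reduceCtorEq, false_and,
    or_false, exists_and_left, exists_eq_left']
  exact ⟨fun ⟨_, h⟩ => h.elim id T.adj_symm, fun h => ⟨h.ne, Or.inl h⟩⟩

@[simp]
lemma adj_none_some {a : V} : (apexGraph T S).Adj none (some a) ↔ a ∈ S := by
  simp [apexGraph, fromRel_adj]

lemma colorable_succ {n : ℕ} (hT : T.Colorable n) : (apexGraph T S).Colorable (n + 1) := by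
  obtain ⟨C⟩ := hT
  refine ⟨Coloring.mk (fun x => x.elim (Fin.last n) fun a => (C a).castSucc) ?_⟩
  rintro (_ | a) (_ | b) h
  · exact absurd h (SimpleGraph.irrefl _)
  · exact (Fin.castSucc_lt_last _).ne'
  · exact (Fin.castSucc_lt_last _).ne
  · simpa using C.valid (adj_some_some.mp h)

lemma exists_coloring_monochromatic_of_colorable_two (h : (apexGraph T S).Colorable 2) :
    ∃ c : V → Bool, (∀ a b, T.Adj a b → c a ≠ c b) ∧ ∃ col : Bool, ∀ a ∈ S, c a = col :=
  let C : (apexGraph T S).Coloring Bool := h.toColoring (by simp)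
  ⟨fun a => C (some a), fun _ _ hab => C.valid (adj_some_some.mpr hab), !C none,
    fun _ ha => Bool.eq_not.mpr (C.valid (adj_none_some.mpr ha)).symm⟩

end apexGraph

theorem stmt15_general {VT : Type*} (T : SimpleGraph VT) (hT : T.IsTree) (S : Set VT)
    -- (a) no proper 2-coloring of `T` makes all of `N_G(v) = S` monochromatic
    (ha : ¬ ∃ c : VT → Bool, (∀ a b, T.Adj a b → c a ≠ c b) ∧
      ∃ col : Bool, ∀ a ∈ S, c a = col) :
    (apexGraph T S).chromaticNumber = (3 : ℕ∞) :=
  chromaticNumber_eq_iff_colorable_not_colorable.mpr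
    ⟨apexGraph.colorable_succ hT.colorable_two,
      fun h => ha (apexGraph.exists_coloring_monochromatic_of_colorable_two h)⟩

theorem stmt15 {VT : Type*} [Fintype VT] (T : SimpleGraph VT) (hT : T.IsTree)
    (hcard : 4 ≤ Fintype.card VT) (S : Set VT)
    -- (a) no proper 2-coloring of `T` makes all of `N_G(v) = S` monochromatic
    (ha : ¬ ∃ c : VT → Bool, (∀ a b, T.Adj a b → c a ≠ c b) ∧
      ∃ col : Bool, ∀ a ∈ S, c a = col)
    -- (b) some `u ∈ S` and proper 2-coloring of `T` make `S \\ {u}` monochromatic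
    (hb : ∃ u ∈ S, ∃ c : VT → Bool, (∀ a b, T.Adj a b → c a ≠ c b) ∧
      ∃ col : Bool, ∀ a ∈ S, a ≠ u → c a = col) :
    (apexGraph T S).chromaticNumber = (3 : ℕ∞) :=
  stmt15_general T hT S ha
end
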